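/- arXiv:1507.02384 — 2 statements merged into one kernel-verified Lean document; each statement's English description precedes it below -/
import Mathlib

section
/- Let G be a finite simple graph whose vertex set is partitioned into disjoint sets A, B, and {x}. Let C' be the A-König cover of the bipartite graph G[A, B] and let C_A be the A-König cover of the bipartite graph G[A, B ∪ {x}]. Then B ∩ C_A ⊆ B ∩ C'. -/
open SimpleGraph

/-- A vertex cover of a graph: a set of vertices containing at least one endpoint
of every edge. -/
def IsVertexCover {V : Type} (G : SimpleGraph V) (C : Set V) : Prop :=
  ∀ ⦃u v : V⦄, G.Adj u v → u ∈ C ∨ v ∈ C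

/-- A minimum vertex cover: a vertex cover of smallest cardinality. -/
def IsMinVertexCover {V : Type} (G : SimpleGraph V) (C : Set V) : Prop :=
  _root_.IsVertexCover G C ∧ ∀ C' : Set V, _root_.IsVertexCover G C' → C.ncard ≤ C'.ncard

/-- `(A, B)` is a bipartition of `G`: `A` and `B` are disjoint, cover all vertices,
and every edge joins a vertex of `A` to a vertex of `B`. -/
def IsBipartition {V : Type} (G : SimpleGraph V) (A B : Set V) : Prop :=
  Disjoint A B ∧ A ∪ B = Set.univ ∧
    ∀ ⦃u v : V⦄, G.Adj u v → (u ∈ A ∧ v ∈ B) ∨ (u ∈ B ∧ v ∈ A)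

/-- A matching of `G`: a set of edges of `G` that are pairwise vertex-disjoint. -/
def IsMatching' {V : Type} (G : SimpleGraph V) (M : Set (Sym2 V)) : Prop :=
  M ⊆ G.edgeSet ∧ ∀ e ∈ M, ∀ f ∈ M, e ≠ f → ∀ v : V, ¬ (v ∈ e ∧ v ∈ f)

/-- A maximum matching: a matching of largest cardinality. -/
def IsMaxMatching {V : Type} (G : SimpleGraph V) (M : Set (Sym2 V)) : Prop :=
  IsMatching' G M ∧ ∀ M' : Set (Sym2 V), IsMatching' G M' → M'.ncard ≤ M.ncard

/-- A vertex is `M`-saturated if it is an endpoint of some edge of `M`. -/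
def MSaturated {V : Type} (M : Set (Sym2 V)) (v : V) : Prop :=
  ∃ e ∈ M, v ∈ e

/-- A list of edges is `M`-alternating if consecutive edges alternate between
membership and non-membership in `M`. -/
def AlternatingEdges {V : Type} (M : Set (Sym2 V)) (l : List (Sym2 V)) : Prop :=
  List.Chain' (fun e f => (e ∈ M ↔ f ∉ M)) l

/-- The edge `e` lies on an `M`-alternating path starting at an `M`-unsaturated
vertex of `A`. -/
def OnAltPath {V : Type} (G : SimpleGraph V) (M : Set (Sym2 V)) (A : Set V)
    (e : Sym2 V) : Prop :=
  ∃ (a z : V) (p : G.Walk a z), a ∈ A ∧ ¬ MSaturated M a ∧ p.IsPath ∧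
    AlternatingEdges M p.edges ∧ e ∈ p.edges

/-- The `A`-König cover of `G` constructed from a maximum matching `M`: for each
edge `ab ∈ M` with `a ∈ A` and `b ∈ B`, put `b` into the cover if `ab` lies on an
`M`-alternating path starting at an `M`-unsaturated vertex of `A`, and otherwise
put `a` into the cover. -/
def koenigCoverFrom {V : Type} (G : SimpleGraph V) (M : Set (Sym2 V))
    (A B : Set V) : Set V :=
  {b | b ∈ B ∧ ∃ e ∈ M, b ∈ e ∧ OnAltPath G M A e} ∪
    {a | a ∈ A ∧ ∃ e ∈ M, a ∈ e ∧ ¬ OnAltPath G M A e}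

/-- `C` is the `A`-König cover of the bipartite graph `G` with bipartition `(A,B)`:
the unique minimum vertex cover such that every minimum vertex cover `C'`
satisfies `A ∩ C' ⊆ A ∩ C` and `B ∩ C ⊆ B ∩ C'`. -/
def IsKoenigCover {V : Type} (G : SimpleGraph V) (A B : Set V) (C : Set V) : Prop :=
  IsMinVertexCover G C ∧
    ∀ C' : Set V, IsMinVertexCover G C' → A ∩ C' ⊆ A ∩ C ∧ B ∩ C ⊆ B ∩ C'

/-- `G[S,T]`: the bipartite graph on the vertices of `G` whose edges are exactly
the edges of `G` with one endpoint in `S` and the other in `T`. -/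
def crossingGraph {V : Type} (G : SimpleGraph V) (S T : Set V) : SimpleGraph V where
  Adj u v := G.Adj u v ∧ ((u ∈ S ∧ v ∈ T) ∨ (u ∈ T ∧ v ∈ S))
  symm := ⟨fun u v h =>
    ⟨h.1.symm, h.2.elim (fun h' => Or.inr ⟨h'.2, h'.1⟩) (fun h' => Or.inl ⟨h'.2, h'.1⟩)⟩⟩
  loopless := ⟨fun u h => G.loopless.irrefl u h.1⟩

/-!
Let `τ` and `τ'` be the minimum cover sizes of `G[A, B]` and `G[A, B ∪ {x}]`, so `τ ≤ τ' ≤ τ + 1`.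
It suffices to find a minimum cover `D` of `G[A, B ∪ {x}]` with `B ∩ D ⊆ C'`, since the
`A`-König cover `C_A` satisfies `B ∩ C_A ⊆ D`. If `τ' = τ + 1`, take `D = C' ∪ {x}`.
If `τ' = τ`, then `x ∉ C_A` (as `x` is isolated in `G[A, B]`), so `C_A` is a minimum cover of
`G[A, B]` and `A ∩ C_A ⊆ C'`; hence `C'` also covers the edges at `x`, and `D = C'` works.
-/

open Set

variable {V : Type} {G H : SimpleGraph V} {S T T' A B C D : Set V} {x : V}

theorem crossingGraph_mono_right (hT : T ⊆ T') : crossingGraph G S T ≤ crossingGraph G S T' :=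
  fun _ _ h => ⟨h.1, h.2.imp (And.imp_right (hT ·)) (And.imp_left (hT ·))⟩

theorem crossingGraph_not_adj_of_notMem (hxS : x ∉ S) (hxT : x ∉ T) (v : V) :
    ¬ (crossingGraph G S T).Adj x v := by
  rintro ⟨-, ⟨hx, -⟩ | ⟨hx, -⟩⟩
  exacts [hxS hx, hxT hx]

theorem IsVertexCover.mono (hGH : G ≤ H) (hC : _root_.IsVertexCover H C) :
    _root_.IsVertexCover G C :=
  fun _ _ h => hC (hGH h)

theorem IsVertexCover.diff_singleton_of_not_adj (hC : _root_.IsVertexCover G C)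
    (hx : ∀ v, ¬ G.Adj x v) : _root_.IsVertexCover G (C \ {x}) := by
  intro u v huv
  have hu : u ≠ x := by rintro rfl; exact hx v huv
  have hv : v ≠ x := by rintro rfl; exact hx u huv.symm
  exact (hC huv).imp (⟨·, hu⟩) (⟨·, hv⟩)

theorem IsVertexCover.insert_crossingGraph_union_singleton
    (hC : _root_.IsVertexCover (crossingGraph G S T) C) :
    _root_.IsVertexCover (crossingGraph G S (T ∪ {x})) (insert x C) := by
  rintro u v ⟨huv, ⟨hu, hv | rfl⟩ | ⟨hu | rfl, hv⟩⟩
  · exact (hC ⟨huv, Or.inl ⟨hu, hv⟩⟩).imp (mem_insert_of_mem x) (mem_insert_of_mem x)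
  · exact Or.inr (mem_insert _ _)
  · exact (hC ⟨huv, Or.inr ⟨hu, hv⟩⟩).imp (mem_insert_of_mem x) (mem_insert_of_mem x)
  · exact Or.inl (mem_insert _ _)

/-- An edge `s x` with `s ∈ S` is covered by `D` through `s`, which then lies in `C`. -/
theorem IsVertexCover.crossingGraph_union_singleton
    (hC : _root_.IsVertexCover (crossingGraph G S T) C)
    (hD : _root_.IsVertexCover (crossingGraph G S (T ∪ {x})) D) (hxD : x ∉ D) (hSD : S ∩ D ⊆ C) :
    _root_.IsVertexCover (crossingGraph G S (T ∪ {x})) C := by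
  rintro u v ⟨hG, ⟨hu, hv | rfl⟩ | ⟨hu | rfl, hv⟩⟩
  · exact hC ⟨hG, Or.inl ⟨hu, hv⟩⟩
  · exact Or.inl (hSD ⟨hu, (hD ⟨hG, Or.inl ⟨hu, Or.inr rfl⟩⟩).resolve_right hxD⟩)
  · exact hC ⟨hG, Or.inr ⟨hu, hv⟩⟩
  · exact Or.inr (hSD ⟨hv, (hD ⟨hG, Or.inr ⟨Or.inr rfl, hv⟩⟩).resolve_left hxD⟩)

theorem IsMinVertexCover.of_ncard_le (hC : IsMinVertexCover G C) (hD : _root_.IsVertexCover G D)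
    (hDC : D.ncard ≤ C.ncard) : IsMinVertexCover G D :=
  ⟨hD, fun _ hE => hDC.trans (hC.2 _ hE)⟩

theorem IsMinVertexCover.ncard_lt_of_mem_of_not_adj (hC : IsMinVertexCover G C)
    (hD : _root_.IsVertexCover G D) (hDfin : D.Finite) (hxD : x ∈ D) (hx : ∀ v, ¬ G.Adj x v) :
    C.ncard < D.ncard :=
  (hC.2 _ (hD.diff_singleton_of_not_adj hx)).trans_lt (ncard_sdiff_singleton_lt_of_mem hxD hDfin)

theorem IsKoenigCover.inter_left_subset (hC : IsKoenigCover G A B C)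
    (hD : IsMinVertexCover G D) : A ∩ D ⊆ A ∩ C :=
  (hC.2 D hD).1

theorem IsKoenigCover.inter_right_subset (hC : IsKoenigCover G A B C)
    (hD : IsMinVertexCover G D) : B ∩ C ⊆ B ∩ D :=
  (hC.2 D hD).2

theorem single_koenig_B_subset_general {V : Type} [Fintype V] (G : SimpleGraph V)
    (A B : Set V) (x : V)
    (hxA : x ∉ A) (hxB : x ∉ B)
    (C' : Set V) (hC' : IsKoenigCover (crossingGraph G A B) A B C')
    (CA : Set V)
    (hCA : IsKoenigCover (crossingGraph G A (B ∪ {x})) A (B ∪ {x}) CA) :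
    B ∩ CA ⊆ B ∩ C' := by
  have hCA_cov : _root_.IsVertexCover (crossingGraph G A B) CA :=
    hCA.1.1.mono (crossingGraph_mono_right subset_union_left)
  suffices ∃ D, IsMinVertexCover (crossingGraph G A (B ∪ {x})) D ∧ B ∩ D ⊆ C' by
    obtain ⟨D, hD, hDC'⟩ := this
    intro v hv
    have hvD := hCA.inter_right_subset hD ⟨Or.inl hv.1, hv.2⟩
    exact ⟨hv.1, hDC' ⟨hv.1, hvD.2⟩⟩
  rcases lt_or_ge C'.ncard CA.ncard with hlt | hge
  · refine ⟨insert x C', hCA.1.of_ncard_le hC'.1.1.insert_crossingGraph_union_singleton ?_, ?_⟩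
    · exact (ncard_insert_le x C').trans hlt
    · rintro v ⟨hvB, rfl | hv⟩
      exacts [absurd hvB hxB, hv]
  · have hxCA : x ∉ CA := fun hx => (hC'.1.ncard_lt_of_mem_of_not_adj hCA_cov CA.toFinite hx
      (crossingGraph_not_adj_of_notMem hxA hxB)).not_ge hge
    have hle : C'.ncard ≤ CA.ncard := hC'.1.2 CA hCA_cov
    have hACA : A ∩ CA ⊆ C' :=
      (hC'.inter_left_subset (hC'.1.of_ncard_le hCA_cov hge)).trans inter_subset_right
    exact ⟨C', hCA.1.of_ncard_le
      (hC'.1.1.crossingGraph_union_singleton hCA.1.1 hxCA hACA) hle, inter_subset_right⟩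

/-- For a partition of the vertices of `G` into `A`, `B` and
`{x}`, the `A`-König cover `C'` of `G[A, B]` and the `A`-König cover `C_A` of
`G[A, B ∪ {x}]` satisfy `B ∩ C_A ⊆ B ∩ C'`. -/
theorem single_koenig_B_subset {V : Type} [Fintype V] (G : SimpleGraph V)
    (A B : Set V) (x : V)
    (hAB : Disjoint A B) (hxA : x ∉ A) (hxB : x ∉ B)
    (hU : A ∪ B ∪ {x} = Set.univ)
    (C' : Set V) (hC' : IsKoenigCover (crossingGraph G A B) A B C')
    (CA : Set V)
    (hCA : IsKoenigCover (crossingGraph G A (B ∪ {x})) A (B ∪ {x}) CA) :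
    B ∩ CA ⊆ B ∩ C' :=
  single_koenig_B_subset_general G A B x hxA hxB C' hC' CA hCA
end

section
/- Let G be a finite simple graph whose vertex set is partitioned into disjoint sets A, B, and {x}. Let C' be the A-König cover of the bipartite graph G[A, B] and let C be a minimum vertex cover of the bipartite graph G[A ∪ {x}, B]. Then B ∩ C' ⊆ B ∩ C. -/
open SimpleGraph

/-!
Covers of `G[A, B]` form a lattice under "more of `A`, less of `B`": from covers `C` and `C'` one
gets the covers `E = (A ∩ (C ∪ C')) ∪ (B ∩ C ∩ C')` and `F = (A ∩ C ∩ C') ∪ (B ∩ (C ∪ C'))` with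
`|E| + |F| ≤ |C ∩ (A ∪ B)| + |C'|`. If `C` is a minimum cover of `G[A ∪ {x}, B]`, then `F` together
with `C ∖ (A ∪ B)` still covers that graph (an edge at `x ∉ C` is covered by its end in `B ∩ C`), so
minimality of `C` forces `|E| ≤ |C'|`. Thus `E` is a minimum cover of `G[A, B]`, and the König
property of `C'` gives `B ∩ C' ⊆ B ∩ E ⊆ C`.
-/

section

variable {V : Type} {G : SimpleGraph V} {A B : Set V}

theorem crossingGraph_comm (G : SimpleGraph V) (A B : Set V) :
    crossingGraph G B A = crossingGraph G A B := by
  ext u v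
  simp only [crossingGraph, or_comm]

theorem crossingGraph_mono {A A' B B' : Set V} (hA : A ⊆ A') (hB : B ⊆ B') :
    crossingGraph G A B ≤ crossingGraph G A' B' := by
  rintro u v ⟨huv, h⟩
  exact ⟨huv, h.imp (And.imp (@hA u) (@hB v)) (And.imp (@hB u) (@hA v))⟩

theorem IsVertexCover.anti {H H' : SimpleGraph V} {C : Set V} (hle : H ≤ H')
    (hC : _root_.IsVertexCover H' C) : _root_.IsVertexCover H C :=
  fun _ _ huv => hC (hle huv)

theorem isVertexCover_crossingGraph_iff {C : Set V} :
    _root_.IsVertexCover (crossingGraph G A B) C ↔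
      ∀ u ∈ A, ∀ v ∈ B, G.Adj u v → u ∈ C ∨ v ∈ C := by
  refine ⟨fun hC u hu v hv huv => hC ⟨huv, .inl ⟨hu, hv⟩⟩, ?_⟩
  rintro hC u v ⟨huv, ⟨hu, hv⟩ | ⟨hu, hv⟩⟩
  · exact hC u hu v hv huv
  · exact (hC v hv u hu huv.symm).symm

def coverJoin (A B D D' : Set V) : Set V :=
  A ∩ (D ∪ D') ∪ B ∩ (D ∩ D')

theorem isVertexCover_coverJoin {D D' : Set V}
    (hD : _root_.IsVertexCover (crossingGraph G A B) D)
    (hD' : _root_.IsVertexCover (crossingGraph G A B) D') :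
    _root_.IsVertexCover (crossingGraph G A B) (coverJoin A B D D') := by
  rw [isVertexCover_crossingGraph_iff] at hD hD' ⊢
  intro u hu v hv huv
  by_cases huD : u ∈ D ∪ D'
  · exact .inl (.inl ⟨hu, huD⟩)
  · rw [Set.mem_union, not_or] at huD
    exact .inr (.inr ⟨hv, (hD u hu v hv huv).resolve_left huD.1,
      (hD' u hu v hv huv).resolve_left huD.2⟩)

theorem isVertexCover_coverJoin_swap {D D' : Set V}
    (hD : _root_.IsVertexCover (crossingGraph G A B) D)
    (hD' : _root_.IsVertexCover (crossingGraph G A B) D') :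
    _root_.IsVertexCover (crossingGraph G A B) (coverJoin B A D D') := by
  rw [← crossingGraph_comm] at hD hD' ⊢
  exact isVertexCover_coverJoin hD hD'

theorem ncard_inter_union_add_ncard_inter_inter [Finite V] (S D D' : Set V) :
    (S ∩ (D ∪ D')).ncard + (S ∩ (D ∩ D')).ncard = (S ∩ D).ncard + (S ∩ D').ncard := by
  rw [Set.inter_union_distrib_left, Set.inter_inter_distrib_left]
  exact Set.ncard_union_add_ncard_inter _ _

theorem ncard_coverJoin_add_ncard_coverJoin_swap [Finite V] (hAB : Disjoint A B) (D D' : Set V) :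
    (coverJoin A B D D').ncard + (coverJoin B A D D').ncard =
      ((A ∪ B) ∩ D).ncard + ((A ∪ B) ∩ D').ncard := by
  have hsplit (S T : Set V) : (A ∩ S ∪ B ∩ T).ncard = (A ∩ S).ncard + (B ∩ T).ncard :=
    Set.ncard_union_eq (hAB.mono Set.inter_subset_left Set.inter_subset_left)
  have hsplit' (S T : Set V) : (B ∩ S ∪ A ∩ T).ncard = (A ∩ T).ncard + (B ∩ S).ncard := by
    rw [Set.union_comm, hsplit, add_comm]
  rw [coverJoin, coverJoin, hsplit, hsplit', Set.union_inter_distrib_right,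
    Set.union_inter_distrib_right, hsplit, hsplit]
  have := ncard_inter_union_add_ncard_inter_inter A D D'
  have := ncard_inter_union_add_ncard_inter_inter B D D'
  omega

theorem isVertexCover_coverJoin_swap_union_diff {X C C' : Set V}
    (hC : _root_.IsVertexCover (crossingGraph G (A ∪ X) B) C)
    (hC' : _root_.IsVertexCover (crossingGraph G A B) C') :
    _root_.IsVertexCover (crossingGraph G (A ∪ X) B) (coverJoin B A C C' ∪ C \ (A ∪ B)) := by
  have hCAB := hC.anti (crossingGraph_mono Set.subset_union_left le_rfl)
  have hF := isVertexCover_crossingGraph_iff.mp (isVertexCover_coverJoin_swap hCAB hC')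
  rw [isVertexCover_crossingGraph_iff] at hC ⊢
  intro u hu v hv huv
  by_cases huA : u ∈ A
  · exact (hF u huA v hv huv).imp .inl .inl
  rcases hC u hu v hv huv with huC | hvC
  · by_cases huB : u ∈ B
    · exact .inl (.inl (.inl ⟨huB, .inl huC⟩))
    · exact .inl (.inr ⟨huC, by simp [huA, huB]⟩)
  · exact .inr (.inl (.inl ⟨hv, .inl hvC⟩))

theorem inter_subset_of_isKoenigCover_of_isMinVertexCover [Finite V] {X C C' : Set V}
    (hAB : Disjoint A B) (hC' : IsKoenigCover (crossingGraph G A B) A B C')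
    (hC : IsMinVertexCover (crossingGraph G (A ∪ X) B) C) :
    B ∩ C' ⊆ C := by
  obtain ⟨⟨hC'cover, hC'min⟩, hC'koenig⟩ := hC'
  have hCAB := hC.1.anti (crossingGraph_mono Set.subset_union_left le_rfl)
  have hE_le : (coverJoin A B C C').ncard ≤ C'.ncard := by
    have hF := hC.2 _ (isVertexCover_coverJoin_swap_union_diff hC.1 hC'cover)
    have hF_union := Set.ncard_union_le (coverJoin B A C C') (C \ (A ∪ B))
    have hEF := ncard_coverJoin_add_ncard_coverJoin_swap hAB C C'
    have hC'_inter := Set.ncard_le_ncard (Set.inter_subset_right (s := A ∪ B) (t := C'))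
    have hC_split := Set.ncard_inter_add_ncard_sdiff_eq_ncard C (A ∪ B)
    rw [Set.inter_comm C] at hC_split
    omega
  have hEmin : IsMinVertexCover (crossingGraph G A B) (coverJoin A B C C') :=
    ⟨isVertexCover_coverJoin hCAB hC'cover, fun D hD => hE_le.trans (hC'min D hD)⟩
  rintro b hb
  obtain ⟨hbB, hbE⟩ := (hC'koenig _ hEmin).2 hb
  rcases hbE with ⟨hbA, -⟩ | ⟨-, hbC, -⟩
  · exact absurd hbB (Set.disjoint_left.mp hAB hbA)
  · exact hbC

end

theorem single_inter_B_subset_general {V : Type} [Fintype V] (G : SimpleGraph V)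
    (A B : Set V) (x : V)
    (hAB : Disjoint A B)
    (C' : Set V) (hC' : IsKoenigCover (crossingGraph G A B) A B C')
    (C : Set V) (hC : IsMinVertexCover (crossingGraph G (A ∪ {x}) B) C) :
    B ∩ C' ⊆ B ∩ C :=
  fun _ hb => ⟨hb.1, inter_subset_of_isKoenigCover_of_isMinVertexCover hAB hC' hC hb⟩

/-- For a partition of the vertices of `G` into `A`, `B` and
`{x}`, the `A`-König cover `C'` of `G[A, B]` and any minimum vertex cover `C` of
`G[A ∪ {x}, B]` satisfy `B ∩ C' ⊆ B ∩ C`. -/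
theorem single_inter_B_subset {V : Type} [Fintype V] (G : SimpleGraph V)
    (A B : Set V) (x : V)
    (hAB : Disjoint A B) (hxA : x ∉ A) (hxB : x ∉ B)
    (hU : A ∪ B ∪ {x} = Set.univ)
    (C' : Set V) (hC' : IsKoenigCover (crossingGraph G A B) A B C')
    (C : Set V) (hC : IsMinVertexCover (crossingGraph G (A ∪ {x}) B) C) :
    B ∩ C' ⊆ B ∩ C :=
  single_inter_B_subset_general G A B x hAB C' hC' C hC
end
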